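/- arXiv:1502.06695 — 3 statements merged into one kernel-verified Lean document; each statement's English description precedes it below -/
import Mathlib

section
/- Let Q_j^{(i)} (0 ≤ i, j ≤ L−1) be a solution of the Hermite–Padé approximation problem and P_i^{(j)} (0 ≤ i, j ≤ L−1) a solution of the simultaneous Padé approximation problem for the same f_0, …, f_{L−1}. Then the L×L matrix product M_Q(w)·M_P(w) equals w^{nL}·D for some diagonal constant matrix D ∈ ℂ^{L×L}. Moreover, if each Q_i^{(i)} is monic of degree n and each P_i^{(i)} is monic of degree n(L−1), then D is the identity matrix. -/
noncomputable section

/-- `g = O(w^N)`: the coefficients of `w^0, …, w^{N-1}` in `g` vanish. -/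
def bigOh (g : PowerSeries ℂ) (N : ℕ) : Prop := ∀ k < N, PowerSeries.coeff k g = 0

/-- The entries of the row vector Q̃^{(i)} = (Q_0^{(i)}, …, Q_i^{(i)}, wQ_{i+1}^{(i)}, …, wQ_{L-1}^{(i)}). -/
def Qtil {L : ℕ} (Q : Fin L → Fin L → Polynomial ℂ) (i j : Fin L) : Polynomial ℂ :=
  if (j : ℕ) ≤ (i : ℕ) then Q i j else Polynomial.X * Q i j

/-- A solution of the Hermite–Padé approximation problem. -/
def IsHPSol {L : ℕ} (n : ℕ) (f : Fin L → PowerSeries ℂ)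
    (Q : Fin L → Fin L → Polynomial ℂ) : Prop :=
  (∀ i j, (Q i j).degree ≤ ((n - 1 + if i = j then 1 else 0 : ℕ) : WithBot ℕ)) ∧
  ∀ i, bigOh (∑ j, f j * ((Qtil Q i j : Polynomial ℂ) : PowerSeries ℂ)) (n * L)

/-- The entries of the column vector P̃^{(j)} = ᵀ(wP_0^{(j)}, …, wP_{j-1}^{(j)}, P_j^{(j)}, …, P_{L-1}^{(j)}). -/
def Ptil {L : ℕ} (P : Fin L → Fin L → Polynomial ℂ) (j i : Fin L) : Polynomial ℂ :=
  if (i : ℕ) < (j : ℕ) then Polynomial.X * P j i else P j i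

/-- A solution of the simultaneous Padé approximation problem.
Here `P j i` denotes the polynomial `P_i^{(j)}`. -/
def IsSPSol {L : ℕ} [NeZero L] (n : ℕ) (f : Fin L → PowerSeries ℂ)
    (P : Fin L → Fin L → Polynomial ℂ) : Prop :=
  (∀ j i, (P j i).degree ≤ ((n * (L - 1) - 1 + if i = j then 1 else 0 : ℕ) : WithBot ℕ)) ∧
  (∀ i : Fin L, 1 ≤ (i : ℕ) →
    bigOh (f 0 * ((P 0 i : Polynomial ℂ) : PowerSeries ℂ)
      - f i * ((P 0 0 : Polynomial ℂ) : PowerSeries ℂ)) (n * L)) ∧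
  (∀ j i : Fin L, 1 ≤ (j : ℕ) → 1 ≤ (i : ℕ) → (i : ℕ) < (j : ℕ) →
    bigOh (f 0 * ((P j i : Polynomial ℂ) : PowerSeries ℂ)
      - f i * ((P j 0 : Polynomial ℂ) : PowerSeries ℂ)) (n * L)) ∧
  (∀ j i : Fin L, 1 ≤ (j : ℕ) → (j : ℕ) ≤ (i : ℕ) →
    bigOh (f 0 * ((P j i : Polynomial ℂ) : PowerSeries ℂ)
      - f i * ((Polynomial.X * P j 0 : Polynomial ℂ) : PowerSeries ℂ)) (n * L))

/-!
Every entry `Σ_j Q̃^{(i)}_j P̃^{(k)}_j` of `M_Q M_P` is a polynomial of degree at most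
`n + n(L-1) = nL`. Since `f₀` is a unit, Mahler's identity
`f₀ Σ_j a_j b_j = b₀ Σ_j f_j a_j + Σ_j a_j (f₀ b_j - f_j b₀)` with `a = Q̃^{(i)}`, `b = P̃^{(k)}`
shows that the entry is `O(w^{nL})`: the first sum is the Hermite–Padé remainder and the
brackets are the simultaneous Padé remainders. So the entry is `c w^{nL}`. For `i < k` the
spare factors `w` in `P̃^{(k)}_0`, in `Q̃^{(i)}_j` (`j > i`) and in the remainders with
`j ≤ i < k` make it `O(w^{nL+1})`, hence zero. For `i ≥ k` the coefficient of `w^{nL}` is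
`Σ_j [w^n] Q̃^{(i)}_j · [w^{n(L-1)}] P̃^{(k)}_j`, in which only `j = i = k` survives the degree
bounds, leaving the product of the leading coefficients of `Q_i^{(i)}` and `P_i^{(i)}`.
-/

open Polynomial

theorem bigOh_iff_X_pow_dvd {g : PowerSeries ℂ} {N : ℕ} : bigOh g N ↔ PowerSeries.X ^ N ∣ g :=
  PowerSeries.X_pow_dvd_iff.symm

theorem Nat.add_mul_sub_one_eq_mul {n L : ℕ} (hL : 1 ≤ L) : n + n * (L - 1) = n * L := by
  rw [Nat.mul_sub_one, Nat.add_sub_cancel' (Nat.le_mul_of_pos_right n hL)]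

namespace Polynomial

variable {R : Type*}

theorem X_pow_dvd_coe_iff [CommSemiring R] {p : R[X]} {N : ℕ} :
    PowerSeries.X ^ N ∣ (p : PowerSeries R) ↔ X ^ N ∣ p := by
  simp only [PowerSeries.X_pow_dvd_iff, X_pow_dvd_iff, coeff_coe]

theorem coe_sum_mul [CommSemiring R] {ι : Type*} (s : Finset ι) (a b : ι → R[X]) :
    ((∑ j ∈ s, a j * b j : R[X]) : PowerSeries R) = ∑ j ∈ s, (a j : PowerSeries R) * b j := by
  simp only [← coeToPowerSeries.ringHom_apply, map_sum, map_mul]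

theorem natDegree_X_mul_le_of_lt [Semiring R] {p : R[X]} {d : ℕ} (h : p.natDegree < d) :
    (X * p).natDegree ≤ d :=
  natDegree_mul_le.trans (by have := natDegree_X_le (R := R); omega)

theorem eq_C_mul_X_pow_of_X_pow_dvd [Semiring R] {p : R[X]} {N : ℕ} (hdvd : X ^ N ∣ p)
    (hdeg : p.natDegree ≤ N) : p = C (p.coeff N) * X ^ N := by
  ext r
  rw [coeff_C_mul_X_pow]
  rcases lt_trichotomy r N with h | rfl | h
  · rw [if_neg h.ne, X_pow_dvd_iff.mp hdvd r h]
  · rw [if_pos rfl]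
  · rw [if_neg h.ne', coeff_eq_zero_of_natDegree_lt (hdeg.trans_lt h)]

end Polynomial

section Mahler

variable {R ι : Type*} [CommRing R] [Fintype ι]

theorem mul_sum_mul_eq_add_sum_mul_sub (f a b : ι → R) (i₀ : ι) :
    f i₀ * ∑ j, a j * b j =
      b i₀ * ∑ j, f j * a j + ∑ j, a j * (f i₀ * b j - f j * b i₀) := by
  rw [Finset.mul_sum, Finset.mul_sum, ← Finset.sum_add_distrib]
  exact Finset.sum_congr rfl fun j _ => by ring

theorem dvd_sum_mul_of_isUnit {d : R} {f a b : ι → R} (i₀ : ι) (hf : IsUnit (f i₀))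
    (h₀ : d ∣ b i₀ * ∑ j, f j * a j) (h : ∀ j, d ∣ a j * (f i₀ * b j - f j * b i₀)) :
    d ∣ ∑ j, a j * b j := by
  rw [← hf.dvd_mul_left, mul_sum_mul_eq_add_sum_mul_sub f a b i₀]
  exact dvd_add h₀ (Finset.dvd_sum fun j _ => h j)

end Mahler

section Tilde

variable {L : ℕ} (M : Fin L → Fin L → ℂ[X]) {i j : Fin L}

theorem Qtil_of_le (h : j ≤ i) : Qtil M i j = M i j := if_pos h

theorem Qtil_of_lt (h : i < j) : Qtil M i j = X * M i j := if_neg (not_le.mpr h)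

theorem Ptil_of_lt (h : i < j) : Ptil M j i = X * M j i := if_pos h

theorem Ptil_of_le (h : j ≤ i) : Ptil M j i = M j i := if_neg (not_lt.mpr h)

end Tilde

namespace IsHPSol

variable {L n : ℕ} {f : Fin L → PowerSeries ℂ} {Q : Fin L → Fin L → ℂ[X]}

theorem natDegree_le (hQ : IsHPSol n f Q) (hn : 0 < n) (i j : Fin L) :
    (Q i j).natDegree ≤ n :=
  (natDegree_le_iff_degree_le.mpr (hQ.1 i j)).trans (by split <;> omega)

theorem natDegree_lt (hQ : IsHPSol n f Q) (hn : 0 < n) {i j : Fin L} (hij : i ≠ j) :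
    (Q i j).natDegree < n :=
  (natDegree_le_iff_degree_le.mpr (hQ.1 i j)).trans_lt (by rw [if_neg hij]; omega)

theorem natDegree_Qtil_le (hQ : IsHPSol n f Q) (hn : 0 < n) (i j : Fin L) :
    (Qtil Q i j).natDegree ≤ n := by
  rcases le_or_gt j i with h | h
  · rw [Qtil_of_le Q h]
    exact hQ.natDegree_le hn i j
  · rw [Qtil_of_lt Q h]
    exact natDegree_X_mul_le_of_lt (hQ.natDegree_lt hn h.ne)

theorem natDegree_Qtil_lt (hQ : IsHPSol n f Q) (hn : 0 < n) {i j : Fin L} (h : j < i) :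
    (Qtil Q i j).natDegree < n := by
  rw [Qtil_of_le Q h.le]
  exact hQ.natDegree_lt hn h.ne'

theorem X_pow_dvd (hQ : IsHPSol n f Q) (i : Fin L) :
    PowerSeries.X ^ (n * L) ∣ ∑ j, f j * (Qtil Q i j : PowerSeries ℂ) :=
  bigOh_iff_X_pow_dvd.mp (hQ.2 i)

end IsHPSol

namespace IsSPSol

variable {L n : ℕ} [NeZero L] {f : Fin L → PowerSeries ℂ} {P : Fin L → Fin L → ℂ[X]}

theorem natDegree_le (hP : IsSPSol n f P) (hm : 0 < n * (L - 1)) (k j : Fin L) :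
    (P k j).natDegree ≤ n * (L - 1) :=
  (natDegree_le_iff_degree_le.mpr (hP.1 k j)).trans (by split <;> omega)

theorem natDegree_lt (hP : IsSPSol n f P) (hm : 0 < n * (L - 1)) {k j : Fin L} (hjk : j ≠ k) :
    (P k j).natDegree < n * (L - 1) :=
  (natDegree_le_iff_degree_le.mpr (hP.1 k j)).trans_lt (by rw [if_neg hjk]; omega)

theorem natDegree_Ptil_le (hP : IsSPSol n f P) (hm : 0 < n * (L - 1)) (k j : Fin L) :
    (Ptil P k j).natDegree ≤ n * (L - 1) := by
  rcases lt_or_ge j k with h | h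
  · rw [Ptil_of_lt P h]
    exact natDegree_X_mul_le_of_lt (hP.natDegree_lt hm h.ne)
  · rw [Ptil_of_le P h]
    exact hP.natDegree_le hm k j

theorem natDegree_Ptil_lt (hP : IsSPSol n f P) (hm : 0 < n * (L - 1)) {k j : Fin L}
    (h : k < j) : (Ptil P k j).natDegree < n * (L - 1) := by
  rw [Ptil_of_le P h.le]
  exact hP.natDegree_lt hm h.ne'

theorem X_pow_succ_dvd_sub (hP : IsSPSol n f P) {k j : Fin L} (h : j < k) :
    PowerSeries.X ^ (n * L + 1) ∣
      f 0 * (Ptil P k j : PowerSeries ℂ) - f j * (Ptil P k 0 : PowerSeries ℂ) := by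
  obtain rfl | hj := eq_or_ne j 0
  · rw [sub_self]
    exact dvd_zero _
  have hj' : 1 ≤ (j : ℕ) := Nat.pos_of_ne_zero (Fin.val_ne_zero_iff.mpr hj)
  have hk : (0 : Fin L) < k := (Fin.pos_iff_ne_zero.mpr hj).trans h
  have hG := bigOh_iff_X_pow_dvd.mp (hP.2.2.1 k j (by omega) hj' h)
  rw [Ptil_of_lt P h, Ptil_of_lt P hk, pow_succ']
  convert mul_dvd_mul_left PowerSeries.X hG using 1
  push_cast
  ring

theorem X_pow_dvd_sub (hP : IsSPSol n f P) (k j : Fin L) :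
    PowerSeries.X ^ (n * L) ∣
      f 0 * (Ptil P k j : PowerSeries ℂ) - f j * (Ptil P k 0 : PowerSeries ℂ) := by
  rcases lt_or_ge j k with h | h
  · exact (pow_dvd_pow _ (Nat.le_succ _)).trans (hP.X_pow_succ_dvd_sub h)
  rw [Ptil_of_le P h]
  obtain rfl | hk := eq_or_ne k 0
  · rw [Ptil_of_le P le_rfl]
    obtain rfl | hj := eq_or_ne j 0
    · rw [sub_self]
      exact dvd_zero _
    exact bigOh_iff_X_pow_dvd.mp
      (hP.2.1 j (Nat.pos_of_ne_zero (Fin.val_ne_zero_iff.mpr hj)))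
  rw [Ptil_of_lt P (Fin.pos_iff_ne_zero.mpr hk)]
  exact bigOh_iff_X_pow_dvd.mp
    (hP.2.2.2 k j (Nat.pos_of_ne_zero (Fin.val_ne_zero_iff.mpr hk)) h)

end IsSPSol

section Product

variable {L n : ℕ} [NeZero L] {f : Fin L → PowerSeries ℂ} {Q P : Fin L → Fin L → ℂ[X]}

theorem X_pow_dvd_sum_Qtil_mul_Ptil (hf0 : IsUnit (f 0)) (hQ : IsHPSol n f Q)
    (hP : IsSPSol n f P) (i k : Fin L) : X ^ (n * L) ∣ ∑ j, Qtil Q i j * Ptil P k j := by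
  rw [← X_pow_dvd_coe_iff, coe_sum_mul]
  exact dvd_sum_mul_of_isUnit 0 hf0 (dvd_mul_of_dvd_right (hQ.X_pow_dvd i) _)
    fun j => dvd_mul_of_dvd_right (hP.X_pow_dvd_sub k j) _

theorem X_pow_succ_dvd_sum_Qtil_mul_Ptil (hf0 : IsUnit (f 0)) (hQ : IsHPSol n f Q)
    (hP : IsSPSol n f P) {i k : Fin L} (hik : i < k) :
    X ^ (n * L + 1) ∣ ∑ j, Qtil Q i j * Ptil P k j := by
  rw [← X_pow_dvd_coe_iff, coe_sum_mul, pow_succ']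
  refine dvd_sum_mul_of_isUnit 0 hf0 ?_ fun j => ?_
  · rw [Ptil_of_lt P ((Fin.zero_le i).trans_lt hik), coe_mul, coe_X, mul_assoc]
    exact mul_dvd_mul_left _ (dvd_mul_of_dvd_right (hQ.X_pow_dvd i) _)
  rcases le_or_gt j i with hji | hij
  · rw [← pow_succ']
    exact dvd_mul_of_dvd_right (hP.X_pow_succ_dvd_sub (hji.trans_lt hik)) _
  · rw [Qtil_of_lt Q hij, coe_mul, coe_X, mul_assoc]
    exact mul_dvd_mul_left _ (dvd_mul_of_dvd_right (hP.X_pow_dvd_sub k j) _)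

theorem natDegree_sum_Qtil_mul_Ptil_le (hn : 0 < n) (hL : 2 ≤ L) (hQ : IsHPSol n f Q)
    (hP : IsSPSol n f P) (i k : Fin L) : (∑ j, Qtil Q i j * Ptil P k j).natDegree ≤ n * L := by
  have hm : 0 < n * (L - 1) := Nat.mul_pos hn (by omega)
  rw [← Nat.add_mul_sub_one_eq_mul (by omega)]
  exact natDegree_sum_le_of_forall_le _ _ fun j _ =>
    natDegree_mul_le_of_le (hQ.natDegree_Qtil_le hn i j) (hP.natDegree_Ptil_le hm k j)

theorem coeff_sum_Qtil_mul_Ptil_of_le (hn : 0 < n) (hL : 2 ≤ L) (hQ : IsHPSol n f Q)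
    (hP : IsSPSol n f P) {i k : Fin L} (hki : k ≤ i) :
    (∑ j, Qtil Q i j * Ptil P k j).coeff (n * L) =
      if i = k then (Q i i).coeff n * (P i i).coeff (n * (L - 1)) else 0 := by
  have hm : 0 < n * (L - 1) := Nat.mul_pos hn (by omega)
  rw [finsetSum_coeff, ← Nat.add_mul_sub_one_eq_mul (by omega)]
  simp only [coeff_mul_add_eq_of_natDegree_le (hQ.natDegree_Qtil_le hn i _)
    (hP.natDegree_Ptil_le hm k _)]
  rw [Finset.sum_eq_single i (fun j _ hji => ?_) (by simp)]
  · split_ifs with hik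
    · subst hik
      rw [Qtil_of_le Q le_rfl, Ptil_of_le P le_rfl]
    · rw [coeff_eq_zero_of_natDegree_lt (hP.natDegree_Ptil_lt hm (hki.lt_of_ne' hik)), mul_zero]
  rcases hji.lt_or_gt with h | h
  · rw [coeff_eq_zero_of_natDegree_lt (hQ.natDegree_Qtil_lt hn h), zero_mul]
  · rw [coeff_eq_zero_of_natDegree_lt (hP.natDegree_Ptil_lt hm (hki.trans_lt h)), mul_zero]

theorem sum_Qtil_mul_Ptil_eq (hn : 0 < n) (hL : 2 ≤ L) (hf0 : IsUnit (f 0)) (hQ : IsHPSol n f Q)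
    (hP : IsSPSol n f P) (i k : Fin L) :
    ∑ j, Qtil Q i j * Ptil P k j =
      if i = k then C ((Q i i).coeff n * (P i i).coeff (n * (L - 1))) * X ^ (n * L) else 0 := by
  rw [eq_C_mul_X_pow_of_X_pow_dvd (X_pow_dvd_sum_Qtil_mul_Ptil hf0 hQ hP i k)
    (natDegree_sum_Qtil_mul_Ptil_le hn hL hQ hP i k)]
  rcases lt_or_ge i k with hik | hki
  · have htop := X_pow_dvd_iff.mp (X_pow_succ_dvd_sum_Qtil_mul_Ptil hf0 hQ hP hik)
    rw [if_neg hik.ne, htop _ (Nat.lt_succ_self _), C_0, zero_mul]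
  · rw [coeff_sum_Qtil_mul_Ptil_of_le hn hL hQ hP hki]
    split_ifs <;> simp

end Product

/-- Mahler-type duality for the modified Hermite–Padé and simultaneous Padé problems. -/
theorem duality (L n : ℕ) (hL : 2 ≤ L) [NeZero L] (hn : 0 < n)
    (f : Fin L → PowerSeries ℂ) (hf0 : PowerSeries.constantCoeff (f 0) ≠ 0)
    (Q P : Fin L → Fin L → Polynomial ℂ)
    (hQ : IsHPSol n f Q) (hP : IsSPSol n f P) :
    (∃ D : Fin L → ℂ,
        (Matrix.of fun i j => Qtil Q i j) * (Matrix.of fun i j => Ptil P j i) =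
          Matrix.diagonal fun i => Polynomial.C (D i) * Polynomial.X ^ (n * L)) ∧
      ((∀ i, (Q i i).Monic ∧ (Q i i).natDegree = n) →
        (∀ i, (P i i).Monic ∧ (P i i).natDegree = n * (L - 1)) →
        (Matrix.of fun i j => Qtil Q i j) * (Matrix.of fun i j => Ptil P j i) =
          Matrix.diagonal fun _ => Polynomial.X ^ (n * L)) := by
  have hunit : IsUnit (f 0) := PowerSeries.isUnit_iff_constantCoeff.mpr hf0.isUnit
  have hM : (Matrix.of fun i j => Qtil Q i j) * (Matrix.of fun i j => Ptil P j i) =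
      Matrix.diagonal fun i =>
        C ((Q i i).coeff n * (P i i).coeff (n * (L - 1))) * X ^ (n * L) := by
    refine Matrix.ext fun i k => ?_
    rw [Matrix.mul_apply, Matrix.diagonal_apply]
    exact sum_Qtil_mul_Ptil_eq hn hL hunit hQ hP i k
  refine ⟨⟨_, hM⟩, fun hQm hPm => ?_⟩
  rw [hM]
  congr! with i
  have hQ1 : (Q i i).coeff n = 1 := (hQm i).2 ▸ (hQm i).1.coeff_natDegree
  have hP1 : (P i i).coeff (n * (L - 1)) = 1 := (hPm i).2 ▸ (hPm i).1.coeff_natDegree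
  rw [hQ1, hP1, mul_one, C_1, one_mul]
end
end

section
/- Fix i with 0 ≤ i ≤ L−1, let Q_j^{(i)} be the determinant-defined Hermite–Padé polynomials and ρ_i = O(w^{nL}) the corresponding remainder. Then the coefficient of w^{nL} in ρ_i equals (−1)^{nL}·det[A^0_0(nL+1,n), …, A^{i−1}_0(nL+1,n), A^i_0(nL+1,n+1), A^{i+1}_{−1}(nL+1,n), …, A^{L−1}_{−1}(nL+1,n)]. -/
noncomputable section

/-- The coefficient sequence of a power series, extended by `0` to negative indices. -/
def aext (f : PowerSeries ℂ) : ℤ → ℂ :=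
  fun j => if 0 ≤ j then PowerSeries.coeff j.toNat f else 0

/-- Entry `(r, c)` (0-indexed) of the `nL × (nL+1)` matrix
`𝒜^{(i)} = [A^0_0(nL,n), …, A^{i-1}_0(nL,n), A^i_0(nL,n+1), A^{i+1}_{-1}(nL,n), …, A^{L-1}_{-1}(nL,n)]`,
where `a k` is the (extended) coefficient sequence of `f_k`. -/
def calA (n i : ℕ) (a : ℕ → ℤ → ℂ) (r c : ℕ) : ℂ :=
  if c < n * i then a (c / n) ((r : ℤ) - ((c % n : ℕ) : ℤ))
  else if c < n * i + n + 1 then a i ((r : ℤ) - (((c - n * i : ℕ)) : ℤ))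
  else a ((c - (n * i + n + 1)) / n + i + 1)
      ((r : ℤ) - ((((c - (n * i + n + 1)) % n : ℕ)) : ℤ) - 1)

/-- The determinant-defined Hermite–Padé polynomial `Q_j^{(i)}(w)`:
the determinant of the `(nL+1) × (nL+1)` matrix whose first row carries the
monomials `1, w, …, w^{n-1+δᵢⱼ}` in the `j`th block of columns and zeros
elsewhere, and whose remaining `nL` rows form `𝒜^{(i)}`. -/
def Qpoly (L n i j : ℕ) (a : ℕ → ℤ → ℂ) : Polynomial ℂ :=
  Matrix.det (Matrix.of fun r c : Fin (n * L + 1) =>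
    if (r : ℕ) = 0 then
      (if n * j + (if i < j then 1 else 0) ≤ (c : ℕ) ∧
          (c : ℕ) < n * j + (if i < j then 1 else 0) + n + (if i = j then 1 else 0) then
        Polynomial.X ^ ((c : ℕ) - (n * j + (if i < j then 1 else 0)))
      else 0)
    else Polynomial.C (calA n i a ((r : ℕ) - 1) (c : ℕ)))

/-- The remainder `ρ_i = Q_0^{(i)}f_0 + ⋯ + Q_i^{(i)}f_i + wQ_{i+1}^{(i)}f_{i+1} + ⋯ + wQ_{L-1}^{(i)}f_{L-1}`
for the determinant-defined Hermite–Padé polynomials. -/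
def rhoRem (L n i : ℕ) (f : ℕ → PowerSeries ℂ) : PowerSeries ℂ :=
  ∑ j ∈ Finset.range L,
    (if j ≤ i then ((Qpoly L n i j (fun k => aext (f k)) : Polynomial ℂ) : PowerSeries ℂ)
     else PowerSeries.X * ((Qpoly L n i j (fun k => aext (f k)) : Polynomial ℂ) : PowerSeries ℂ)) * f j

/-! Expanding `Q_j^{(i)}` along its first row gives `Q_j^{(i)} = ∑_c s_c w^{c - start_j}`, the sum
over the columns `c` of the `j`th block, where `s_c` is the signed maximal minor of `𝒜^{(i)}` with
column `c` deleted. Column `c` of `𝒜^{(i)}`, lying in block `j(c)`, is the coefficient sequence of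
`w^{c - n j(c)} f_{j(c)}`, and the extra factor `w` in front of the blocks `j > i` is exactly the
shift that makes this work. Hence `ρ_i = ∑_c s_c w^{c - n j(c)} f_{j(c)}`, so the coefficient of
`w^{nL}` in `ρ_i` is `∑_c s_c 𝒜_{nL,c}`: the cofactor expansion of the `(nL+1)`-square determinant
along its last row, up to the sign `(-1)^{nL}`. -/

namespace Matrix

variable {R : Type*} [CommRing R] {m : ℕ}

def signedMinor (B : Matrix (Fin m) (Fin (m + 1)) R) (c : Fin (m + 1)) : R :=
  (-1) ^ (c : ℕ) * (B.submatrix id c.succAbove).det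

theorem det_eq_sum_mul_signedMinor_row_zero (M : Matrix (Fin (m + 1)) (Fin (m + 1)) R) :
    M.det = ∑ c, M 0 c * (M.submatrix Fin.succ id).signedMinor c := by
  rw [det_succ_row_zero]
  refine Finset.sum_congr rfl fun c _ => ?_
  rw [signedMinor, submatrix_submatrix, Function.comp_id, Function.id_comp]
  ring

theorem det_eq_sum_mul_signedMinor_row_last (M : Matrix (Fin (m + 1)) (Fin (m + 1)) R) :
    M.det = (-1) ^ m * ∑ c, M (Fin.last m) c * (M.submatrix Fin.castSucc id).signedMinor c := by
  rw [det_succ_row _ (Fin.last m), Finset.mul_sum]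
  refine Finset.sum_congr rfl fun c _ => ?_
  rw [signedMinor, submatrix_submatrix, Function.comp_id, Function.id_comp, Fin.val_last,
    Fin.succAbove_last, pow_add]
  ring

theorem signedMinor_map {S : Type*} [CommRing S] (φ : R →+* S)
    (B : Matrix (Fin m) (Fin (m + 1)) R) (c : Fin (m + 1)) :
    (B.map φ).signedMinor c = φ (B.signedMinor c) := by
  simp only [signedMinor, map_mul, map_pow, map_neg, map_one, RingHom.map_det]
  rfl

end Matrix

section Blocks

variable {n i j c : ℕ}

-- The columns of `𝒜^{(i)}` form consecutive blocks, block `j` having width `n + δᵢⱼ`; `InBlock`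
-- is the support of the first row of the matrix defining `Q_j^{(i)}`.
def blockStart (n i j : ℕ) : ℕ := n * j + if i < j then 1 else 0

def InBlock (n i j c : ℕ) : Prop :=
  blockStart n i j ≤ c ∧ c < blockStart n i j + n + if i = j then 1 else 0

instance : Decidable (InBlock n i j c) := inferInstanceAs (Decidable (_ ∧ _))

def blockIdx (n i c : ℕ) : ℕ :=
  if c < n * i then c / n
  else if c < n * i + n + 1 then i
  else (c - (n * i + n + 1)) / n + i + 1

theorem blockStart_succ (n i j : ℕ) :
    blockStart n i (j + 1) = blockStart n i j + n + if i = j then 1 else 0 := by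
  unfold blockStart
  rw [Nat.mul_succ]
  split_ifs <;> omega

theorem blockStart_mono (n i : ℕ) : Monotone (blockStart n i) := by
  intro j k hjk
  have := Nat.mul_le_mul_left n hjk
  unfold blockStart
  split_ifs <;> omega

theorem not_inBlock_of_lt {k : ℕ} (hjk : j < k) (h : InBlock n i j c) : ¬InBlock n i k c := by
  have hle := blockStart_mono n i (Nat.succ_le_of_lt hjk)
  rw [blockStart_succ] at hle
  unfold InBlock at h ⊢
  omega

theorem InBlock.eq {k : ℕ} (hj : InBlock n i j c) (hk : InBlock n i k c) : j = k := by
  by_contra hne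
  rcases Nat.lt_or_gt_of_ne hne with hjk | hkj
  · exact not_inBlock_of_lt hjk hj hk
  · exact not_inBlock_of_lt hkj hk hj

theorem InBlock.lt {L : ℕ} (hi : i < L) (hc : c ≤ n * L) (h : InBlock n i j c) : j < L := by
  by_contra hLj
  have hnL := Nat.mul_le_mul_left n (not_lt.1 hLj)
  unfold InBlock blockStart at h
  rw [if_pos (by omega)] at h
  omega

theorem inBlock_blockIdx {L : ℕ} (hc : c ≤ n * L) : InBlock n i (blockIdx n i c) c := by
  unfold InBlock blockIdx
  by_cases h₁ : c < n * i
  · have hn : 0 < n := Nat.pos_of_ne_zero (by rintro rfl; simp at h₁)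
    have hdiv : c / n < i := Nat.div_lt_of_lt_mul h₁
    have hlt := Nat.lt_mul_div_succ c hn
    have hle := Nat.mul_div_le c n
    rw [if_pos h₁, blockStart, if_neg (by omega), if_neg (by omega)]
    rw [Nat.mul_add_one] at hlt
    omega
  by_cases h₂ : c < n * i + n + 1
  · rw [if_neg h₁, if_pos h₂, blockStart, if_neg (lt_irrefl i), if_pos rfl]
    omega
  · have hn : 0 < n := Nat.pos_of_ne_zero (by rintro rfl; simp at hc; omega)
    have hlt := Nat.lt_mul_div_succ (c - (n * i + n + 1)) hn
    have hle := Nat.mul_div_le (c - (n * i + n + 1)) n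
    generalize (c - (n * i + n + 1)) / n = q at hlt hle ⊢
    rw [if_neg h₁, if_neg h₂, blockStart, if_pos (by omega), if_neg (by omega),
      Nat.mul_add, Nat.mul_add, Nat.mul_one]
    rw [Nat.mul_add_one] at hlt
    omega

theorem inBlock_iff {L : ℕ} (hc : c ≤ n * L) : InBlock n i j c ↔ j = blockIdx n i c :=
  ⟨fun h => h.eq (inBlock_blockIdx hc), fun h => h ▸ inBlock_blockIdx hc⟩

theorem calA_eq (a : ℕ → ℤ → ℂ) (r c : ℕ) :
    calA n i a r c = a (blockIdx n i c) ((r : ℤ) - c + n * blockIdx n i c) := by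
  unfold calA blockIdx
  split_ifs with h₁ h₂
  · have h := Nat.div_add_mod c n
    generalize c / n = q at h ⊢
    generalize c % n = m at h ⊢
    congr 1
    rw [← h]
    push_cast
    ring
  · congr 1
    push_cast [show n * i ≤ c by omega]
    ring
  · have h := Nat.div_add_mod (c - (n * i + n + 1)) n
    generalize (c - (n * i + n + 1)) / n = q at h ⊢
    generalize (c - (n * i + n + 1)) % n = m at h ⊢
    obtain ⟨d, rfl⟩ : ∃ d, c = d + (n * i + n + 1) := ⟨c - (n * i + n + 1), by omega⟩
    rw [Nat.add_sub_cancel] at h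
    congr 1
    rw [← h]
    push_cast
    ring

theorem sum_ite_inBlock {M : Type*} [AddCommMonoid M] {L n i c : ℕ} (hi : i < L) (hc : c ≤ n * L)
    (g : ℕ → M) :
    ∑ j ∈ Finset.range L, (if InBlock n i j c then g j else 0) = g (blockIdx n i c) := by
  rw [Finset.sum_eq_single_of_mem _ (Finset.mem_range.2 ((inBlock_blockIdx hc).lt hi hc))]
  · exact if_pos (inBlock_blockIdx hc)
  · exact fun j _ hj => if_neg fun h => hj ((inBlock_iff hc).1 h)

end Blocks

def calAMatrix (n L i : ℕ) (a : ℕ → ℤ → ℂ) : Matrix (Fin (n * L)) (Fin (n * L + 1)) ℂ :=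
  Matrix.of fun r c => calA n i a r c

theorem Qpoly_eq_sum (L n i j : ℕ) (a : ℕ → ℤ → ℂ) :
    Qpoly L n i j a = ∑ c : Fin (n * L + 1),
      (if InBlock n i j c then Polynomial.X ^ ((c : ℕ) - blockStart n i j) else 0) *
        Polynomial.C ((calAMatrix n L i a).signedMinor c) := by
  rw [Qpoly, Matrix.det_eq_sum_mul_signedMinor_row_zero]
  refine Finset.sum_congr rfl fun c _ => ?_
  rw [← Matrix.signedMinor_map]
  rfl

theorem coeff_X_pow_mul_eq_aext (φ : PowerSeries ℂ) (r k : ℕ) :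
    PowerSeries.coeff r (PowerSeries.X ^ k * φ) = aext φ ((r : ℤ) - k) := by
  rw [PowerSeries.coeff_X_pow_mul', aext]
  split_ifs with h₁ h₂ h₂
  · congr
    omega
  · omega
  · omega
  · rfl

theorem coe_Qpoly_shift_eq_sum {L n i : ℕ} (a : ℕ → ℤ → ℂ) (j : ℕ) :
    (if j ≤ i then (Qpoly L n i j a : PowerSeries ℂ)
      else PowerSeries.X * (Qpoly L n i j a : PowerSeries ℂ)) =
      ∑ c : Fin (n * L + 1), PowerSeries.C ((calAMatrix n L i a).signedMinor c) *
        (if InBlock n i j c then PowerSeries.X ^ ((c : ℕ) - n * j) else 0) := by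
  have hcoe : (Qpoly L n i j a : PowerSeries ℂ) = ∑ c : Fin (n * L + 1),
      PowerSeries.C ((calAMatrix n L i a).signedMinor c) *
        (if InBlock n i j c then PowerSeries.X ^ ((c : ℕ) - blockStart n i j) else 0) := by
    rw [Qpoly_eq_sum, ← Polynomial.coeToPowerSeries.ringHom_apply, map_sum]
    refine Finset.sum_congr rfl fun c _ => ?_
    rw [map_mul, mul_comm]
    split_ifs <;> simp
  rw [hcoe]
  split_ifs with hji
  · simp only [blockStart, if_neg (not_lt.2 hji), add_zero]
  · rw [Finset.mul_sum]
    refine Finset.sum_congr rfl fun c _ => ?_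
    rw [mul_left_comm, mul_ite, mul_zero]
    split_ifs with hc
    · rw [← pow_succ', blockStart, if_pos (not_le.1 hji)]
      congr 2
      unfold InBlock blockStart at hc
      rw [if_pos (not_le.1 hji)] at hc
      omega
    · rfl

theorem rhoRem_eq_sum {L n i : ℕ} (hi : i < L) (f : ℕ → PowerSeries ℂ) :
    rhoRem L n i f = ∑ c : Fin (n * L + 1),
      PowerSeries.C ((calAMatrix n L i fun k => aext (f k)).signedMinor c) *
        (PowerSeries.X ^ ((c : ℕ) - n * blockIdx n i c) * f (blockIdx n i c)) := by
  simp only [rhoRem, coe_Qpoly_shift_eq_sum, Finset.sum_mul]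
  rw [Finset.sum_comm]
  refine Finset.sum_congr rfl fun c _ => ?_
  simp only [mul_assoc, ← Finset.mul_sum, ite_mul, zero_mul]
  rw [sum_ite_inBlock hi c.is_le]

theorem coeff_X_pow_mul_blockIdx {L n i c : ℕ} (hc : c ≤ n * L) (f : ℕ → PowerSeries ℂ) (r : ℕ) :
    PowerSeries.coeff r (PowerSeries.X ^ (c - n * blockIdx n i c) * f (blockIdx n i c)) =
      calA n i (fun k => aext (f k)) r c := by
  have hle : n * blockIdx n i c ≤ c := le_trans (Nat.le_add_right _ _) (inBlock_blockIdx hc).1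
  rw [coeff_X_pow_mul_eq_aext, calA_eq]
  congr 1
  push_cast [hle]
  ring

theorem rho_leading_coeff_general (L n : ℕ) (f : ℕ → PowerSeries ℂ) (i : ℕ) (hi : i < L) :
    PowerSeries.coeff (n * L) (rhoRem L n i f) =
      (-1 : ℂ) ^ (n * L) *
        Matrix.det (Matrix.of fun r c : Fin (n * L + 1) =>
          calA n i (fun k => aext (f k)) (r : ℕ) (c : ℕ)) := by
  have hsign : (-1 : ℂ) ^ (n * L) * (-1) ^ (n * L) = 1 := by rw [← mul_pow]; norm_num
  rw [rhoRem_eq_sum hi, map_sum, Matrix.det_eq_sum_mul_signedMinor_row_last, ← mul_assoc, hsign,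
    one_mul]
  refine Finset.sum_congr rfl fun c _ => ?_
  rw [PowerSeries.coeff_C_mul, coeff_X_pow_mul_blockIdx c.is_le, mul_comm]
  rfl

/-- The leading coefficient of the remainder `ρ_i`. -/
theorem rho_leading_coeff (L n : ℕ) (hL : 2 ≤ L) (hn : 0 < n)
    (f : ℕ → PowerSeries ℂ) (hf0 : PowerSeries.constantCoeff (f 0) ≠ 0)
    (i : ℕ) (hi : i < L) :
    PowerSeries.coeff (n * L) (rhoRem L n i f) =
      (-1 : ℂ) ^ (n * L) *
        Matrix.det (Matrix.of fun r c : Fin (n * L + 1) =>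
          calA n i (fun k => aext (f k)) (r : ℕ) (c : ℕ)) :=
  rho_leading_coeff_general L n f i hi
end
end

section
/- Let {a^k_j}_{j≥0} ⊂ ℂ (1 ≤ k ≤ L−1) be arbitrary sequences, extended by a^k_j := 0 for j < 0, set m = n(L−1), and fix j with 1 ≤ j ≤ L−1. Then det of the m×m matrix with first row (a^j_{m−1}, a^j_{m−2}, …, a^j_0) and remaining rows the stacked blocks A^1_m(n,m), …, A^{j−1}_m(n,m), A^j_m(n−1,m), A^{j+1}_{m−1}(n,m), …, A^{L−1}_{m−1}(n,m) equals (−1)^{n(j−1)}·det of the m×m matrix with rows the stacked blocks A^1_m(n,m), …, A^{j−1}_m(n,m), A^j_{m−1}(n,m), A^{j+1}_{m−1}(n,m), …, A^{L−1}_{m−1}(n,m), which in turn equals (−1)^{m(m−n)/2 + n(j−1)}·Δ^{(j)}. -/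
/-!
Moving the first row down to position `(j-1)n` is the cycle `Fin.cycleRange`, of sign
`(-1)^(n(j-1))`, and it produces the row-stacked Toeplitz blocks. Transposing these, reversing
the order of the rows and reversing the columns inside each block of length `n` gives the matrix
of `Δ^{(j)}`; the two reversals have signs `(-1)^(m choose 2)` and `(-1)^((L-1)(n choose 2))`,
whose product is `(-1)^(m(m-n)/2)`.
-/

noncomputable section

/-- A sequence `ℕ → ℂ` extended by `0` to negative indices. -/
def hz (h : ℕ → ℕ → ℂ) (k : ℕ) : ℤ → ℂ := fun j => if 0 ≤ j then h k j.toNat else 0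

/-- The block-Toeplitz determinant `Δ^{(i)}` of size `m = n(L-1)`:
`Δ^{(i)} = det[A^1_n(m,n), …, A^{i-1}_n(m,n), A^i_{n-1}(m,n), …, A^{L-1}_{n-1}(m,n)]`. -/
def Delta (L n : ℕ) (a : ℕ → ℤ → ℂ) (i : ℕ) : ℂ :=
  Matrix.det (Matrix.of fun r c : Fin (n * (L - 1)) =>
    a ((c : ℕ) / n + 1)
      ((if (c : ℕ) / n + 1 < i then (n : ℤ) else (n : ℤ) - 1) +
        ((r : ℕ) : ℤ) - (((c : ℕ) % n : ℕ) : ℤ)))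

/-- Entry `(r', c)` (0-indexed) of the stacked row-blocks
`A^1_m(n,m'), …, A^{j-1}_m(n,m'), A^j_m(n-1,m'), A^{j+1}_{m-1}(n,m'), …, A^{L-1}_{m-1}(n,m')`,
where `m` is the common upper lower-index. -/
def stackJ (n j m : ℕ) (a : ℕ → ℤ → ℂ) (r' c : ℕ) : ℂ :=
  if r' < (j - 1) * n then
    a (r' / n + 1) ((m : ℤ) + ((r' % n : ℕ) : ℤ) - (c : ℤ))
  else if r' < j * n - 1 then
    a j ((m : ℤ) + (((r' - (j - 1) * n : ℕ)) : ℤ) - (c : ℤ))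
  else
    a ((r' - (j * n - 1)) / n + j + 1)
      ((m : ℤ) - 1 + ((((r' - (j * n - 1)) % n : ℕ)) : ℤ) - (c : ℤ))

open Equiv Equiv.Perm Matrix

namespace Fin

theorem revPerm_succ_eq (q : ℕ) :
    (revPerm : Perm (Fin (q + 1))) =
      finRotate (q + 1) * (revPerm : Perm (Fin q)).extendDomain castSuccEmb.toEquivRange := by
  ext x
  induction x using lastCases with
  | last =>
    rw [Perm.mul_apply, extendDomain_apply_not_subtype _ _ (by simp), finRotate_last]
    simp
  | cast i =>
    rw [Perm.mul_apply, show castSucc i = (castSuccEmb.toEquivRange i : Fin (q + 1)) from rfl,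
      extendDomain_apply_image]
    change ((castSucc i).rev : ℕ) = finRotate (q + 1) (castSucc i.rev)
    rw [coe_finRotate_of_ne_last (castSucc_ne_last _)]
    simp only [val_rev, val_castSucc]
    omega

theorem sign_revPerm (q : ℕ) : sign (revPerm : Perm (Fin q)) = (-1) ^ q.choose 2 := by
  induction q with
  | zero => rfl
  | succ q ih =>
    rw [revPerm_succ_eq, Perm.sign_mul, sign_finRotate, sign_extendDomain, ih,
      Nat.choose_succ_succ', Nat.choose_one_right, pow_add, Nat.add_sub_cancel]

def blockRevPerm (n p : ℕ) : Perm (Fin (n * p)) :=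
  (finProdFinEquiv.trans (finCongr (Nat.mul_comm p n))).permCongr
    (prodCongrRight fun _ => revPerm)

theorem val_blockRevPerm (n p : ℕ) (c : Fin (n * p)) :
    (blockRevPerm n p c : ℕ) = n - (c % n + 1) + n * (c / n) :=
  rfl

theorem sign_blockRevPerm (n p : ℕ) : sign (blockRevPerm n p) = (-1) ^ (n.choose 2 * p) := by
  rw [blockRevPerm, sign_permCongr, sign_prodCongrRight, Finset.prod_const, Finset.card_univ,
    Fintype.card_fin, sign_revPerm, pow_mul]

end Fin

theorem Nat.mul_mul_sub_div_two (n p : ℕ) : n * p * (n * p - n) / 2 = n * n * p.choose 2 := by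
  rw [Nat.choose_two_right, ← Nat.mul_div_assoc _ (Nat.even_mul_pred_self p).two_dvd,
    ← Nat.mul_sub_one]
  ring_nf

theorem Nat.choose_two_mul (n p : ℕ) :
    (n * p).choose 2 = n * n * p.choose 2 + p * n.choose 2 := by
  have h : ((n * p).choose 2 : ℚ) = n * n * p.choose 2 + p * n.choose 2 := by
    simp only [Nat.cast_choose_two, Nat.cast_mul]
    ring
  exact_mod_cast h

/-- Entry `(r, c)` of the row-stacked blocks
`A^1_m(n,m), …, A^{j-1}_m(n,m), A^j_{m-1}(n,m), …, A^{L-1}_{m-1}(n,m)`. -/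
def stackedToeplitz (n j m : ℕ) (a : ℕ → ℤ → ℂ) (r c : ℕ) : ℂ :=
  a (r / n + 1)
    ((if r / n + 1 < j then (m : ℤ) else (m : ℤ) - 1) + ((r % n : ℕ) : ℤ) - (c : ℤ))

section stackJ

variable {n j m r : ℕ} (a : ℕ → ℤ → ℂ) (c : ℕ)

theorem stackJ_of_lt (hr : r < (j - 1) * n) :
    stackJ n j m a r c = stackedToeplitz n j m a r c := by
  have hrn : r / n + 1 < j :=
    Nat.add_lt_of_lt_sub (Nat.div_lt_of_lt_mul (by rwa [Nat.mul_comm]))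
  rw [stackJ, if_pos hr, stackedToeplitz, if_pos hrn]

theorem stackedToeplitz_blockStart (hn : 0 < n) (hj : 1 ≤ j) :
    stackedToeplitz n j m a ((j - 1) * n) c = a j ((m : ℤ) - 1 - c) := by
  rw [stackedToeplitz, Nat.mul_div_cancel _ hn, Nat.mul_mod_left, Nat.sub_add_cancel hj,
    if_neg (lt_irrefl j), Nat.cast_zero, add_zero]

theorem stackJ_of_ge (hn : 0 < n) (hj : 1 ≤ j) (hr : (j - 1) * n ≤ r) :
    stackJ n j m a r c = stackedToeplitz n j m a (r + 1) c := by
  obtain ⟨j, rfl⟩ : ∃ i, j = i + 1 := ⟨j - 1, by omega⟩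
  rw [Nat.add_sub_cancel] at hr
  simp only [stackJ, Nat.add_sub_cancel, Nat.add_one_mul, if_neg (show ¬ r < j * n by omega),
    stackedToeplitz]
  by_cases hblock : r < j * n + n - 1
  · have hq : (r + 1) / n = j := Nat.div_eq_of_lt_le (by lia) (by lia)
    have hm : (r + 1) % n = r + 1 - j * n := by rw [Nat.mod_eq_sub_mul_div, hq, Nat.mul_comm]
    rw [if_pos hblock, hq, hm, if_neg (lt_irrefl _)]
    congr 1
    push_cast [show j * n ≤ r by omega, show j * n ≤ r + 1 by omega]
    ring
  · obtain ⟨s, hs⟩ : ∃ s, r + 1 = s + n * (j + 1) := ⟨r + 1 - n * (j + 1), by lia⟩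
    have hq : (r + 1) / n = s / n + (j + 1) := by rw [hs, Nat.add_mul_div_left _ _ hn]
    have hm : (r + 1) % n = s % n := by rw [hs, Nat.add_mul_mod_self_left]
    rw [if_neg hblock, hq, hm, if_neg (Nat.not_lt.mpr ((Nat.le_add_left _ _).trans (Nat.le_succ _))),
      show r - (j * n + n - 1) = s by lia]

end stackJ

theorem submatrix_cycleRange_eq_stackedToeplitz {N n j m : ℕ} (a : ℕ → ℤ → ℂ) (hn : 0 < n)
    (hj : 1 ≤ j) (hjN : (j - 1) * n < N) :
    (of fun r c : Fin N =>
        if (r : ℕ) = 0 then a j ((m : ℤ) - 1 - ((c : ℕ) : ℤ))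
        else stackJ n j m a ((r : ℕ) - 1) (c : ℕ)).submatrix
      (Fin.cycleRange ⟨(j - 1) * n, hjN⟩) id =
      of fun r c : Fin N => stackedToeplitz n j m a r c := by
  ext s c
  simp only [submatrix_apply, of_apply, id_eq]
  rcases lt_trichotomy (s : ℕ) ((j - 1) * n) with hs | hs | hs
  · rw [Fin.coe_cycleRange_of_lt (j := ⟨_, hjN⟩) hs, if_neg (Nat.succ_ne_zero _),
      Nat.add_sub_cancel, stackJ_of_lt a c hs]
  · obtain rfl : s = ⟨(j - 1) * n, hjN⟩ := Fin.ext hs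
    rw [Fin.coe_cycleRange_of_le le_rfl, if_pos rfl, if_pos rfl,
      stackedToeplitz_blockStart a c hn hj]
  · rw [Fin.cycleRange_of_gt (i := ⟨_, hjN⟩) hs, if_neg (by omega),
      stackJ_of_ge a c hn hj (by omega), Nat.sub_add_cancel (by omega)]

theorem det_firstRow_stackJ {N n j m : ℕ} (a : ℕ → ℤ → ℂ) (hn : 0 < n) (hj : 1 ≤ j)
    (hjN : (j - 1) * n < N) :
    (of fun r c : Fin N =>
        if (r : ℕ) = 0 then a j ((m : ℤ) - 1 - ((c : ℕ) : ℤ))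
        else stackJ n j m a ((r : ℕ) - 1) (c : ℕ)).det =
      (-1) ^ (n * (j - 1)) * (of fun r c : Fin N => stackedToeplitz n j m a r c).det := by
  rw [← submatrix_cycleRange_eq_stackedToeplitz a hn hj hjN, det_permute, Fin.sign_cycleRange,
    ← mul_assoc, Nat.mul_comm]
  push_cast
  rw [← pow_add, ← two_mul, pow_mul, neg_one_sq, one_pow, one_mul]

theorem det_stackedToeplitz_eq_sign_mul_Delta {L n j : ℕ} (a : ℕ → ℤ → ℂ) (hn : 0 < n) :
    (of fun r c : Fin (n * (L - 1)) => stackedToeplitz n j (n * (L - 1)) a r c).det =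
      (-1) ^ (n * (L - 1) * (n * (L - 1) - n) / 2) * Delta L n a j := by
  set A := of fun r c : Fin (n * (L - 1)) => stackedToeplitz n j (n * (L - 1)) a r c
  have hDelta : Delta L n a j = (Aᵀ.submatrix Fin.revPerm (Fin.blockRevPerm n (L - 1))).det := by
    rw [Delta]
    congr 1
    ext r c
    simp only [A, transpose_apply, submatrix_apply, of_apply, stackedToeplitz,
      Fin.val_blockRevPerm, Fin.revPerm_apply, Fin.val_rev]
    have hcn := Nat.mod_lt c hn
    have hq : (n - (c % n + 1) + n * (c / n)) / n = c / n := by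
      rw [Nat.add_mul_div_left _ _ hn, Nat.div_eq_of_lt (by omega), zero_add]
    have hm : (n - (c % n + 1) + n * (c / n)) % n = n - (c % n + 1) := by
      rw [Nat.add_mul_mod_self_left, Nat.mod_eq_of_lt (by omega)]
    simp only [hq, hm]
    congr 1
    push_cast [show c % n + 1 ≤ n by omega, show (r : ℕ) + 1 ≤ n * (L - 1) from r.isLt]
    split_ifs <;> ring
  rw [hDelta, show Aᵀ.submatrix Fin.revPerm (Fin.blockRevPerm n (L - 1)) =
      (Aᵀ.submatrix Fin.revPerm id).submatrix id (Fin.blockRevPerm n (L - 1)) from rfl,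
    det_permute', det_permute, det_transpose, Fin.sign_revPerm, Fin.sign_blockRevPerm,
    Nat.mul_mul_sub_div_two, Nat.choose_two_mul]
  push_cast
  rw [← mul_assoc, ← mul_assoc, ← pow_add, ← pow_add,
    Even.neg_one_pow ⟨n * n * (L - 1).choose 2 + n.choose 2 * (L - 1), by ring⟩, one_mul]

theorem NPj_identity_general (L n : ℕ) (hn : 0 < n) (h : ℕ → ℕ → ℂ)
    (j : ℕ) (hj1 : 1 ≤ j) (hj : j < L) :
    (Matrix.det (Matrix.of fun r c : Fin (n * (L - 1)) =>
        if (r : ℕ) = 0 then hz h j (((n * (L - 1) : ℕ) : ℤ) - 1 - ((c : ℕ) : ℤ))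
        else stackJ n j (n * (L - 1)) (hz h) ((r : ℕ) - 1) (c : ℕ)) =
      (-1 : ℂ) ^ (n * (j - 1)) *
        Matrix.det (Matrix.of fun r c : Fin (n * (L - 1)) =>
          hz h ((r : ℕ) / n + 1)
            ((if (r : ℕ) / n + 1 < j then ((n * (L - 1) : ℕ) : ℤ)
              else ((n * (L - 1) : ℕ) : ℤ) - 1) +
              (((r : ℕ) % n : ℕ) : ℤ) - ((c : ℕ) : ℤ)))) ∧
    (Matrix.det (Matrix.of fun r c : Fin (n * (L - 1)) =>
        if (r : ℕ) = 0 then hz h j (((n * (L - 1) : ℕ) : ℤ) - 1 - ((c : ℕ) : ℤ))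
        else stackJ n j (n * (L - 1)) (hz h) ((r : ℕ) - 1) (c : ℕ)) =
      (-1 : ℂ) ^ ((n * (L - 1)) * (n * (L - 1) - n) / 2 + n * (j - 1)) *
        Delta L n (hz h) j) := by
  have hjN : (j - 1) * n < n * (L - 1) := by
    rw [Nat.mul_comm]
    exact Nat.mul_lt_mul_of_pos_left (by omega) hn
  have hfirst := det_firstRow_stackJ (m := n * (L - 1)) (hz h) hn hj1 hjN
  refine ⟨hfirst, ?_⟩
  rw [hfirst, det_stackedToeplitz_eq_sign_mul_Delta (hz h) hn, ← mul_assoc, ← pow_add,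
    Nat.add_comm (n * (j - 1))]

/-- Evaluation of the normalizing constant `NP^{(j)}` as a block-Toeplitz determinant. -/
theorem NPj_identity (L n : ℕ) (hL : 2 ≤ L) (hn : 0 < n) (h : ℕ → ℕ → ℂ)
    (j : ℕ) (hj1 : 1 ≤ j) (hj : j < L) :
    (Matrix.det (Matrix.of fun r c : Fin (n * (L - 1)) =>
        if (r : ℕ) = 0 then hz h j (((n * (L - 1) : ℕ) : ℤ) - 1 - ((c : ℕ) : ℤ))
        else stackJ n j (n * (L - 1)) (hz h) ((r : ℕ) - 1) (c : ℕ)) =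
      (-1 : ℂ) ^ (n * (j - 1)) *
        Matrix.det (Matrix.of fun r c : Fin (n * (L - 1)) =>
          hz h ((r : ℕ) / n + 1)
            ((if (r : ℕ) / n + 1 < j then ((n * (L - 1) : ℕ) : ℤ)
              else ((n * (L - 1) : ℕ) : ℤ) - 1) +
              (((r : ℕ) % n : ℕ) : ℤ) - ((c : ℕ) : ℤ)))) ∧
    (Matrix.det (Matrix.of fun r c : Fin (n * (L - 1)) =>
        if (r : ℕ) = 0 then hz h j (((n * (L - 1) : ℕ) : ℤ) - 1 - ((c : ℕ) : ℤ))
        else stackJ n j (n * (L - 1)) (hz h) ((r : ℕ) - 1) (c : ℕ)) =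
      (-1 : ℂ) ^ ((n * (L - 1)) * (n * (L - 1) - n) / 2 + n * (j - 1)) *
        Delta L n (hz h) j) :=
  NPj_identity_general L n hn h j hj1 hj
end
end
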